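/- Let 0 < s < 1/2 and let M₄(ξ̄) = (ξ₁⟨ξ₃⟩^{2s} + ξ₂⟨ξ₄⟩^{2s} + ξ₃⟨ξ₁⟩^{2s} + ξ₄⟨ξ₂⟩^{2s})/((ξ₁+ξ₄)(ξ₃+ξ₄)) on {ξ₁+ξ₂+ξ₃+ξ₄ = 0, (ξ₁+ξ₄)(ξ₃+ξ₄) ≠ 0}. Assume max{|ξ₁|,|ξ₃|} is the largest among the |ξⱼ|, the second largest is the other of |ξ₁|,|ξ₃|, and max{|ξ₂|,|ξ₄|} ≤ c·max{|ξ₁|,|ξ₃|} for a sufficiently small constant c > 0. Then |M₄(ξ̄)| ≤ C·⟨max{|ξ₂|,|ξ₄|}⟩·⟨max{|ξ₁|,|ξ₃|}⟩^{2s-2}. -/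

import Mathlib

open Real

/-- Japanese bracket ⟨x⟩ = (1+x²)^{1/2}. -/
noncomputable def jb (x : ℝ) : ℝ := Real.sqrt (1 + x ^ 2)

/-- The multiplier M₄(ξ̄) with weight ⟨ξ⟩^{2s} = (1+ξ²)^s. -/
noncomputable def M4 (s : ℝ) (ξ₁ ξ₂ ξ₃ ξ₄ : ℤ) : ℝ :=
  ((ξ₁ : ℝ) * (1 + (ξ₃ : ℝ) ^ 2) ^ s + (ξ₂ : ℝ) * (1 + (ξ₄ : ℝ) ^ 2) ^ s
      + (ξ₃ : ℝ) * (1 + (ξ₁ : ℝ) ^ 2) ^ s + (ξ₄ : ℝ) * (1 + (ξ₂ : ℝ) ^ 2) ^ s)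
    / (((ξ₁ : ℝ) + ξ₄) * ((ξ₃ : ℝ) + ξ₄))

/-!
Write `m = max |ξ₂| |ξ₄|`, `N = max |ξ₁| |ξ₃|` and split the numerator of `M₄` as
`ξ₁ (⟨ξ₃⟩^{2s} - ⟨ξ₁⟩^{2s}) + (ξ₁ + ξ₃) ⟨ξ₁⟩^{2s} + ξ₂ ⟨ξ₄⟩^{2s} + ξ₄ ⟨ξ₂⟩^{2s}`.
Since `ξ₁ + ξ₃ = -(ξ₂ + ξ₄) = O(m)`, both `|ξ₁|` and `|ξ₃|` are comparable to `N`, so by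
concavity of `t ↦ t ^ s` the weight difference is `O(|ξ₃² - ξ₁²| N^{2s-2}) = O(m N^{2s-1})`.
Hence the numerator is `O(m N^{2s})`, while the denominator `(ξ₁ + ξ₄)(ξ₃ + ξ₄)` is `≳ N²`.
-/

lemma rpow_sub_rpow_le_mul_div {s a b : ℝ} (hs : s ≤ 1) (hb : 0 < b) (hba : b ≤ a) :
    a ^ s - b ^ s ≤ (a - b) * b ^ s / b := by
  have ha : 0 < a := hb.trans_le hba
  have hmono : a ^ (s - 1) ≤ b ^ (s - 1) := rpow_le_rpow_of_nonpos hb hba (by linarith)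
  rw [rpow_sub_one ha.ne', rpow_sub_one hb.ne'] at hmono
  calc a ^ s - b ^ s = a * (a ^ s / a) - b * (b ^ s / b) := by field_simp
    _ ≤ a * (b ^ s / b) - b * (b ^ s / b) := by gcongr
    _ = (a - b) * b ^ s / b := by ring

lemma abs_rpow_sub_rpow_le {s a b L U : ℝ} (hs0 : 0 ≤ s) (hs1 : s ≤ 1) (hL : 0 < L)
    (hLa : L ≤ a) (hLb : L ≤ b) (haU : a ≤ U) (hbU : b ≤ U) :
    |a ^ s - b ^ s| ≤ |a - b| * U ^ s / L := by
  wlog hba : b ≤ a generalizing a b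
  · rw [abs_sub_comm, abs_sub_comm a]
    exact this hLb hLa hbU haU (le_of_not_ge hba)
  have hb : 0 < b := hL.trans_le hLb
  rw [abs_of_nonneg (sub_nonneg.2 (rpow_le_rpow hb.le hba hs0)),
    abs_of_nonneg (sub_nonneg.2 hba)]
  calc a ^ s - b ^ s ≤ (a - b) * b ^ s / b := rpow_sub_rpow_le_mul_div hs1 hb hba
    _ ≤ (a - b) * U ^ s / L := by
      gcongr
      exact mul_nonneg (sub_nonneg.2 hba) (rpow_nonneg (by linarith) s)

lemma one_add_sq_rpow_le {s x N : ℝ} (hs : 0 ≤ s) (hx : |x| ≤ N) :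
    (1 + x ^ 2) ^ s ≤ (1 + N ^ 2) ^ s := by
  have : x ^ 2 ≤ N ^ 2 := by
    rw [← sq_abs]; exact pow_le_pow_left₀ (abs_nonneg x) hx 2
  gcongr

lemma jb_rpow_two_mul (x t : ℝ) : jb x ^ (2 * t) = (1 + x ^ 2) ^ t := by
  rw [jb, sqrt_eq_rpow, ← rpow_mul (by positivity)]
  ring_nf

lemma le_jb (x : ℝ) : x ≤ jb x := by
  refine (le_abs_self x).trans ?_
  rw [jb, ← sqrt_sq_eq_abs]
  exact sqrt_le_sqrt (by linarith)

lemma abs_mul_one_add_sq_rpow_le {s x y a N : ℝ} (hs : 0 ≤ s) (hy : |y| ≤ a) (hx : |x| ≤ N) :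
    |y * (1 + x ^ 2) ^ s| ≤ a * (1 + N ^ 2) ^ s := by
  rw [abs_mul, abs_of_nonneg (rpow_nonneg (by positivity) s)]
  exact mul_le_mul hy (one_add_sq_rpow_le hs hx) (by positivity) ((abs_nonneg y).trans hy)

section FrequencyGeometry

variable {x₁ x₂ x₃ x₄ : ℝ}

lemma abs_add_le_two_mul_max_of_sum_eq_zero (hsum : x₁ + x₂ + x₃ + x₄ = 0) :
    |x₁ + x₃| ≤ 2 * max |x₂| |x₄| := by
  rw [show x₁ + x₃ = -(x₂ + x₄) by linarith, abs_neg]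
  linarith [abs_add_le x₂ x₄, le_max_left |x₂| |x₄|, le_max_right |x₂| |x₄|]

lemma le_abs_of_sum_eq_zero (hsum : x₁ + x₂ + x₃ + x₄ = 0)
    (hsmall : max |x₂| |x₄| ≤ max |x₁| |x₃| / 20) :
    9 / 10 * max |x₁| |x₃| ≤ |x₁| ∧ 9 / 10 * max |x₁| |x₃| ≤ |x₃| := by
  have h13 := abs_add_le_two_mul_max_of_sum_eq_zero hsum
  have h1 := abs_add' x₁ x₃
  have h3 := abs_add' x₃ x₁
  rw [add_comm x₃] at h1
  rcases max_cases |x₁| |x₃| with ⟨hN, _⟩ | ⟨hN, _⟩ <;> rw [hN] at hsmall ⊢ <;>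
    constructor <;> linarith

lemma one_add_sq_div_four_le_abs_mul_of_sum_eq_zero (hsum : x₁ + x₂ + x₃ + x₄ = 0)
    (hsmall : max |x₂| |x₄| ≤ max |x₁| |x₃| / 20) (hN : 1 ≤ max |x₁| |x₃|) :
    (1 + max |x₁| |x₃| ^ 2) / 4 ≤ |(x₁ + x₄) * (x₃ + x₄)| := by
  obtain ⟨h1, h3⟩ := le_abs_of_sum_eq_zero hsum hsmall
  have h4 : |x₄| ≤ max |x₁| |x₃| / 20 := (le_max_right _ _).trans hsmall
  have d1 : 17 / 20 * max |x₁| |x₃| ≤ |x₁ + x₄| := by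
    linarith [add_comm x₄ x₁ ▸ abs_add' x₁ x₄]
  have d3 : 17 / 20 * max |x₁| |x₃| ≤ |x₃ + x₄| := by
    linarith [add_comm x₄ x₃ ▸ abs_add' x₃ x₄]
  rw [abs_mul]
  nlinarith [mul_le_mul d1 d3 (by linarith) (abs_nonneg _)]

end FrequencyGeometry

section RealEstimate

variable {s x₁ x₂ x₃ x₄ : ℝ}

lemma abs_mul_one_add_sq_rpow_sub_le (hs0 : 0 ≤ s) (hs1 : s ≤ 1)
    (hsum : x₁ + x₂ + x₃ + x₄ = 0) (hsmall : max |x₂| |x₄| ≤ max |x₁| |x₃| / 20) :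
    |x₁ * ((1 + x₃ ^ 2) ^ s - (1 + x₁ ^ 2) ^ s)|
      ≤ 8 * max |x₂| |x₄| * (1 + max |x₁| |x₃| ^ 2) ^ s := by
  set m := max |x₂| |x₄|
  set N := max |x₁| |x₃|
  set W := 1 + N ^ 2
  have hx₁ : |x₁| ≤ N := le_max_left _ _
  have hx₃ : |x₃| ≤ N := le_max_right _ _
  obtain ⟨hlow₁, hlow₃⟩ := le_abs_of_sum_eq_zero hsum hsmall
  have hW : 0 < W := by positivity
  have hL₁ : W / 2 ≤ 1 + x₁ ^ 2 := by nlinarith [sq_abs x₁]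
  have hL₃ : W / 2 ≤ 1 + x₃ ^ 2 := by nlinarith [sq_abs x₃]
  have hU₁ : 1 + x₁ ^ 2 ≤ W := by nlinarith [sq_abs x₁, abs_nonneg x₁]
  have hU₃ : 1 + x₃ ^ 2 ≤ W := by nlinarith [sq_abs x₃, abs_nonneg x₃]
  have hsq : |(1 + x₃ ^ 2) - (1 + x₁ ^ 2)| ≤ 2 * m * (2 * N) := by
    rw [show (1 + x₃ ^ 2) - (1 + x₁ ^ 2) = (x₁ + x₃) * (x₃ - x₁) by ring, abs_mul]
    exact mul_le_mul (abs_add_le_two_mul_max_of_sum_eq_zero hsum)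
      (by linarith [abs_sub x₃ x₁]) (abs_nonneg _) (by positivity)
  have hmvt := abs_rpow_sub_rpow_le hs0 hs1 (by positivity) hL₃ hL₁ hU₃ hU₁
  calc |x₁ * ((1 + x₃ ^ 2) ^ s - (1 + x₁ ^ 2) ^ s)|
      = |x₁| * |(1 + x₃ ^ 2) ^ s - (1 + x₁ ^ 2) ^ s| := abs_mul _ _
    _ ≤ N * (2 * m * (2 * N) * W ^ s / (W / 2)) := by
      gcongr
      exact hmvt.trans (by gcongr)
    _ = 8 * m * (N ^ 2 / W) * W ^ s := by field_simp; ring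
    _ ≤ 8 * m * 1 * W ^ s := by
      gcongr
      exact (div_le_one hW).2 (by linarith)
    _ = 8 * m * W ^ s := by ring

lemma abs_numerator_le (hs0 : 0 ≤ s) (hs1 : s ≤ 1)
    (hsum : x₁ + x₂ + x₃ + x₄ = 0) (hsmall : max |x₂| |x₄| ≤ max |x₁| |x₃| / 20) :
    |x₁ * (1 + x₃ ^ 2) ^ s + x₂ * (1 + x₄ ^ 2) ^ s + x₃ * (1 + x₁ ^ 2) ^ s
        + x₄ * (1 + x₂ ^ 2) ^ s|
      ≤ 12 * max |x₂| |x₄| * (1 + max |x₁| |x₃| ^ 2) ^ s := by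
  set m := max |x₂| |x₄|
  set N := max |x₁| |x₃|
  have hx₁ : |x₁| ≤ N := le_max_left _ _
  have hx₂ : |x₂| ≤ m := le_max_left _ _
  have hx₄ : |x₄| ≤ m := le_max_right _ _
  have hmN : m ≤ N := by linarith [(abs_nonneg x₂).trans hx₂]
  have hA := abs_mul_one_add_sq_rpow_sub_le hs0 hs1 hsum hsmall
  have hB := abs_mul_one_add_sq_rpow_le hs0 (abs_add_le_two_mul_max_of_sum_eq_zero hsum) hx₁
  have hC := abs_mul_one_add_sq_rpow_le hs0 hx₂ (hx₄.trans hmN)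
  have hD := abs_mul_one_add_sq_rpow_le hs0 hx₄ (hx₂.trans hmN)
  rw [show x₁ * (1 + x₃ ^ 2) ^ s + x₂ * (1 + x₄ ^ 2) ^ s + x₃ * (1 + x₁ ^ 2) ^ s
      + x₄ * (1 + x₂ ^ 2) ^ s = x₁ * ((1 + x₃ ^ 2) ^ s - (1 + x₁ ^ 2) ^ s)
      + (x₁ + x₃) * (1 + x₁ ^ 2) ^ s + x₂ * (1 + x₄ ^ 2) ^ s + x₄ * (1 + x₂ ^ 2) ^ s by ring]
  linarith [abs_add_le (x₁ * ((1 + x₃ ^ 2) ^ s - (1 + x₁ ^ 2) ^ s)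
      + (x₁ + x₃) * (1 + x₁ ^ 2) ^ s + x₂ * (1 + x₄ ^ 2) ^ s) (x₄ * (1 + x₂ ^ 2) ^ s),
    abs_add_three (x₁ * ((1 + x₃ ^ 2) ^ s - (1 + x₁ ^ 2) ^ s))
      ((x₁ + x₃) * (1 + x₁ ^ 2) ^ s) (x₂ * (1 + x₄ ^ 2) ^ s)]

lemma abs_multiplier_le (hs0 : 0 ≤ s) (hs1 : s ≤ 1)
    (hsum : x₁ + x₂ + x₃ + x₄ = 0) (hsmall : max |x₂| |x₄| ≤ max |x₁| |x₃| / 20)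
    (hN : 1 ≤ max |x₁| |x₃|) :
    |(x₁ * (1 + x₃ ^ 2) ^ s + x₂ * (1 + x₄ ^ 2) ^ s + x₃ * (1 + x₁ ^ 2) ^ s
        + x₄ * (1 + x₂ ^ 2) ^ s) / ((x₁ + x₄) * (x₃ + x₄))|
      ≤ 48 * jb (max |x₂| |x₄|) * jb (max |x₁| |x₃|) ^ (2 * s - 2) := by
  set m := max |x₂| |x₄|
  set N := max |x₁| |x₃|
  set W := 1 + N ^ 2
  have hW : 0 < W := by positivity
  have hden := one_add_sq_div_four_le_abs_mul_of_sum_eq_zero hsum hsmall hN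
  rw [abs_div, div_le_iff₀ ((div_pos hW four_pos).trans_le hden),
    show 2 * s - 2 = 2 * (s - 1) by ring, jb_rpow_two_mul]
  calc _ ≤ 12 * m * W ^ s := abs_numerator_le hs0 hs1 hsum hsmall
    _ = 48 * m * W ^ (s - 1) * (W / 4) := by rw [rpow_sub_one hW.ne']; field_simp; ring
    _ ≤ 48 * m * W ^ (s - 1) * |(x₁ + x₄) * (x₃ + x₄)| := by gcongr
    _ ≤ 48 * jb m * W ^ (s - 1) * |(x₁ + x₄) * (x₃ + x₄)| := by grw [le_jb m]

end RealEstimate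

lemma max_abs_intCast_eq_zero_or_one_le (a b : ℤ) :
    max |(a : ℝ)| |(b : ℝ)| = 0 ∨ 1 ≤ max |(a : ℝ)| |(b : ℝ)| := by
  have : max |(a : ℝ)| |(b : ℝ)| = ((max |a| |b| : ℤ) : ℝ) := by push_cast; rfl
  have hnonneg : 0 ≤ max |a| |b| := le_max_of_le_left (abs_nonneg a)
  rw [this]
  norm_cast
  omega

/-- Case (iii) of the pointwise multiplier estimate for M₄: if ξ₁, ξ₃ carry
the two largest frequencies and ξ₂, ξ₄ are much smaller, then
|M₄| ≲ ⟨max{|ξ₂|,|ξ₄|}⟩·⟨max{|ξ₁|,|ξ₃|}⟩^{2s-2}. -/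
theorem stmt_6 (s : ℝ) (hs0 : 0 < s) (hs : s < 1 / 2) :
    ∃ c C : ℝ, 0 < c ∧ 0 < C ∧ ∀ ξ₁ ξ₂ ξ₃ ξ₄ : ℤ,
      ξ₁ + ξ₂ + ξ₃ + ξ₄ = 0 → ((ξ₁ : ℝ) + ξ₄) * ((ξ₃ : ℝ) + ξ₄) ≠ 0 →
      max |(ξ₂ : ℝ)| |(ξ₄ : ℝ)| ≤ min |(ξ₁ : ℝ)| |(ξ₃ : ℝ)| →
      max |(ξ₂ : ℝ)| |(ξ₄ : ℝ)| ≤ c * max |(ξ₁ : ℝ)| |(ξ₃ : ℝ)| →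
      |M4 s ξ₁ ξ₂ ξ₃ ξ₄|
        ≤ C * jb (max |(ξ₂ : ℝ)| |(ξ₄ : ℝ)|)
            * jb (max |(ξ₁ : ℝ)| |(ξ₃ : ℝ)|) ^ (2 * s - 2) := by
  refine ⟨1 / 20, 48, by norm_num, by norm_num, fun ξ₁ ξ₂ ξ₃ ξ₄ hsum _ _ hsmall => ?_⟩
  rcases max_abs_intCast_eq_zero_or_one_le ξ₁ ξ₃ with hN | hN
  · -- all four frequencies vanish, and `M4` is the junk value `0 / 0 = 0`
    rw [hN, mul_zero] at hsmall
    obtain ⟨h₁, h₃⟩ := max_le_iff.1 hN.le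
    obtain ⟨h₂, h₄⟩ := max_le_iff.1 hsmall
    simp only [abs_nonpos_iff, Int.cast_eq_zero] at h₁ h₂ h₃ h₄
    simp [M4, jb, h₁, h₂, h₃, h₄]
  · exact abs_multiplier_le hs0.le (by linarith) (by exact_mod_cast hsum) (by linarith) hN
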